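/- arXiv:2011.01462 — 2 statements merged into one kernel-verified Lean document; each statement's English description precedes it below -/
import Mathlib

section
/- The ρ-calibrated log-loss upper bounds the ρ-margin loss: for all ρ > 0 and λ ∈ ℝ, min(1, max(0, 1 - λ/ρ)) ≤ log₂(1 + 2^(−λ+ρ)). -/
/-- The ρ-calibrated log-loss upper bounds the ρ-margin loss. -/
theorem rho_calibrated_log_loss_bounds_margin_loss (ρ : ℝ) (hρ : 0 < ρ) (lam : ℝ) :
    min 1 (max 0 (1 - lam / ρ)) ≤ Real.logb 2 (1 + 2 ^ (-lam + ρ)) := by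
  rcases le_or_gt lam ρ with h | h
  · calc min 1 (max 0 (1 - lam / ρ)) ≤ 1 := min_le_left _ _
      _ = Real.logb 2 2 := (Real.logb_self_eq_one (by norm_num)).symm
      _ ≤ Real.logb 2 (1 + 2 ^ (-lam + ρ)) := by
          apply Real.logb_le_logb_of_le (by norm_num : (1:ℝ)<2) (by norm_num)
          have : (1:ℝ) ≤ 2 ^ (-lam + ρ) := by
            apply Real.one_le_rpow (by norm_num) (by linarith)
          linarith
  · have h1 : max 0 (1 - lam / ρ) = 0 := by
      apply max_eq_left
      have : 1 < lam / ρ := (one_lt_div hρ).mpr h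
      linarith
    rw [h1]
    simp only [min_comm, min_le_iff]
    left
    apply Real.logb_nonneg (by norm_num)
    have : (0:ℝ) < 2 ^ (-lam + ρ) := Real.rpow_pos_of_pos (by norm_num) _
    linarith
end

section
/- Let n > 0, c ≥ 1, F > 0, r > 0 and n_k ∈ (0, n) for k = 1,…,c. Among margin-offsets ρ_{01},…,ρ_{0c} > 0 satisfying ∑_k ρ_{0k} = S (a fixed constant) and ρ_{0k}/(4cF) > √(n−n_k)/n_k for all k, the quantity ε = (1/c) ∑_k [r(n−n_k)/n_k²] / [ρ_{0k}/(4cF) − √(n−n_k)/n_k] is minimized exactly when ρ_{0i}/ρ_{0j} = (n_j √(n−n_i)) / (n_i √(n−n_j)) for all i, j (provided such a feasible choice exists), i.e., when ρ_{0k} is proportional to √(n−n_k)/n_k up to the constraint. -/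
private lemma aux_tangent (r b x t : ℝ) (hx : x ≠ 0) (ht : t ≠ 0) :
    r * b ^ 2 / x - r * (2 * b / t - x / t ^ 2) = r * (b * t - x) ^ 2 / (x * t ^ 2) := by
  field_simp
  ring

private lemma aux_val (r b t : ℝ) (hb : b ≠ 0) (ht : t ≠ 0) :
    r * b ^ 2 / (t * b) = r / t * b := by
  field_simp

private lemma aux_xopt (S b B K : ℝ) (hB : B ≠ 0) (hK : K ≠ 0) :
    S * b / B / K - b = (S / (K * B) - 1) * b := by
  field_simp

private lemma aux_rho (ρ K b t : ℝ) (hK : K ≠ 0) (h : ρ / K - b = t * b) :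
    ρ = K * (1 + t) * b := by
  field_simp at h
  linear_combination h

/-- Corollary 1: the error bound ε is minimized over feasible margin-offsets
exactly at the proportional choice ρ₀ᵢ/ρ₀ⱼ = (nⱼ√(n−nᵢ))/(nᵢ√(n−nⱼ)). -/
theorem margin_offsets_optimal (c : ℕ) (hc : 1 ≤ c) (n F r S : ℝ)
    (hn : 0 < n) (hF : 0 < F) (hr : 0 < r)
    (nk : Fin c → ℝ) (hnk : ∀ k, 0 < nk k ∧ nk k < n)
    (feasible : (Fin c → ℝ) → Prop)
    (hfeas : ∀ ρ, feasible ρ ↔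
      ((∀ k, 0 < ρ k) ∧ (∑ k, ρ k) = S ∧
       ∀ k, Real.sqrt (n - nk k) / nk k < ρ k / (4 * c * F)))
    (ε : (Fin c → ℝ) → ℝ)
    (hε : ∀ ρ, ε ρ = (1 / c) * ∑ k,
      (r * (n - nk k) / (nk k) ^ 2) /
        (ρ k / (4 * c * F) - Real.sqrt (n - nk k) / nk k))
    (hexists : ∃ ρopt, feasible ρopt ∧
      ∀ i j, ρopt i * (nk i * Real.sqrt (n - nk j)) =
             ρopt j * (nk j * Real.sqrt (n - nk i))) :
    ∀ ρ, feasible ρ →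
      ((∀ ρ', feasible ρ' → ε ρ ≤ ε ρ') ↔
        ∀ i j, ρ i * (nk i * Real.sqrt (n - nk j)) =
               ρ j * (nk j * Real.sqrt (n - nk i))) := by
  obtain ⟨ρopt, hfo, hpo⟩ := hexists
  have hc0 : (0:ℝ) < (c:ℝ) := by
    have : 0 < c := hc
    exact_mod_cast this
  obtain ⟨K, hKdef⟩ : ∃ K : ℝ, K = 4 * (c:ℝ) * F := ⟨_, rfl⟩
  have hK0 : 0 < K := by rw [hKdef]; positivity
  obtain ⟨b, hbdef⟩ : ∃ b : Fin c → ℝ, b = fun k => Real.sqrt (n - nk k) / nk k := ⟨_, rfl⟩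
  have hbpos : ∀ k, 0 < b k := fun k => by
    rw [hbdef]
    exact div_pos (Real.sqrt_pos.2 (sub_pos.2 (hnk k).2)) (hnk k).1
  have hne : Nonempty (Fin c) := ⟨⟨0, hc⟩⟩
  obtain ⟨B, hBdef⟩ : ∃ B : ℝ, B = ∑ k, b k := ⟨_, rfl⟩
  have hB : 0 < B := hBdef ▸ Finset.sum_pos (fun k _ => hbpos k) Finset.univ_nonempty
  have hbsq : ∀ k, (b k) ^ 2 = (n - nk k) / (nk k) ^ 2 := by
    intro k
    have h1 : (0:ℝ) ≤ n - nk k := le_of_lt (sub_pos.2 (hnk k).2)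
    simp only [hbdef, div_pow, Real.sq_sqrt h1]
  -- rewrite ε
  have hε' : ∀ ρ, ε ρ = (1 / c) * ∑ k, r * (b k) ^ 2 / (ρ k / K - b k) := by
    intro ρ
    rw [hε ρ]
    congr 1
    apply Finset.sum_congr rfl
    intro k _
    rw [hbsq k, hKdef, hbdef]
    ring
  -- feasibility components phrased with b and K
  have hfeas' : ∀ ρ, feasible ρ →
      (∀ k, 0 < ρ k) ∧ (∑ k, ρ k) = S ∧ ∀ k, b k < ρ k / K := by
    intro ρ hρ
    obtain ⟨h1, h2, h3⟩ := (hfeas ρ).1 hρ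
    exact ⟨h1, h2, fun k => by rw [hbdef, hKdef]; exact h3 k⟩
  -- uniqueness: feasible & proportional forces ρ k = S * b k / B
  have uniq : ∀ ρ, feasible ρ →
      (∀ i j, ρ i * (nk i * Real.sqrt (n - nk j)) =
              ρ j * (nk j * Real.sqrt (n - nk i))) →
      ∀ k, ρ k = S * b k / B := by
    intro ρ hρ hp k
    obtain ⟨hpos, hsum, hlt⟩ := hfeas' ρ hρ
    have key : ∀ j, ρ k * b j = ρ j * b k := by
      intro j
      have h := hp k j
      have hk := (hnk k).1.ne'
      have hj := (hnk j).1.ne'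
      rw [hbdef]
      field_simp
      linear_combination h
    have hmain : ρ k * B = S * b k := by
      calc ρ k * B = ∑ j, ρ k * b j := by rw [hBdef, Finset.mul_sum]
        _ = ∑ j, ρ j * b k := Finset.sum_congr rfl (fun j _ => key j)
        _ = (∑ j, ρ j) * b k := by rw [Finset.sum_mul]
        _ = S * b k := by rw [hsum]
    rw [eq_div_iff hB.ne']
    linear_combination hmain
  have hoval : ∀ k, ρopt k = S * b k / B := uniq ρopt hfo hpo
  obtain ⟨t, htdef⟩ : ∃ t : ℝ, t = S / (K * B) - 1 := ⟨_, rfl⟩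
  have hxopt : ∀ k, ρopt k / K - b k = t * b k := by
    intro k
    rw [hoval k, htdef]
    exact aux_xopt S (b k) B K hB.ne' hK0.ne'
  have ht : 0 < t := by
    obtain ⟨hpos, hsum, hlt⟩ := hfeas' ρopt hfo
    set k0 : Fin c := ⟨0, hc⟩
    have h1 : b k0 < ρopt k0 / K := hlt k0
    have h2 : 0 < t * b k0 := by rw [← hxopt k0]; linarith
    have := hbpos k0
    nlinarith
  -- value of ε at the optimum
  have hεopt : ε ρopt = (1 / c) * (r * B / t) := by
    rw [hε' ρopt]
    congr 1
    have heach : ∀ k, r * (b k) ^ 2 / (ρopt k / K - b k) = (r / t) * b k := by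
      intro k
      rw [hxopt k]
      exact aux_val r (b k) t (hbpos k).ne' ht.ne'
    rw [Finset.sum_congr rfl (fun k _ => heach k), ← Finset.mul_sum, ← hBdef]
    ring
  -- sum of slacks is constant
  have hxsum : ∀ ρ', feasible ρ' → ∑ k, (ρ' k / K - b k) = t * B := by
    intro ρ' hρ'
    obtain ⟨hpos, hsum, hlt⟩ := hfeas' ρ' hρ'
    rw [Finset.sum_sub_distrib, ← Finset.sum_div, hsum, ← hBdef, htdef]
    field_simp
  have hxpos : ∀ ρ', feasible ρ' → ∀ k, 0 < ρ' k / K - b k := by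
    intro ρ' hρ' k
    obtain ⟨hpos, hsum, hlt⟩ := hfeas' ρ' hρ'
    have := hlt k
    linarith
  have hterm : ∀ ρ', feasible ρ' → ∀ k,
      r * (b k) ^ 2 / (ρ' k / K - b k) - (r * (2 * b k / t - (ρ' k / K - b k) / t ^ 2))
        = r * (b k * t - (ρ' k / K - b k)) ^ 2 / ((ρ' k / K - b k) * t ^ 2) := by
    intro ρ' hρ' k
    exact aux_tangent r (b k) _ t (hxpos ρ' hρ' k).ne' ht.ne'
  have htangent_sum : ∀ ρ', feasible ρ' →
      ∑ k, r * (2 * b k / t - (ρ' k / K - b k) / t ^ 2) = r * B / t := by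
    intro ρ' hρ'
    have h1 : ∀ k, r * (2 * b k / t - (ρ' k / K - b k) / t ^ 2)
        = (2 * r / t) * b k - (r / t ^ 2) * (ρ' k / K - b k) := by
      intro k; ring
    rw [Finset.sum_congr rfl (fun k _ => h1 k), Finset.sum_sub_distrib,
      ← Finset.mul_sum, ← Finset.mul_sum, ← hBdef, hxsum ρ' hρ']
    have ht' := ht.ne'
    field_simp
    ring
  have hlower : ∀ ρ', feasible ρ' → ε ρopt ≤ ε ρ' := by
    intro ρ' hρ'
    rw [hεopt, hε' ρ']
    have hsum_le : r * B / t ≤ ∑ k, r * (b k) ^ 2 / (ρ' k / K - b k) := by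
      rw [← htangent_sum ρ' hρ']
      apply Finset.sum_le_sum
      intro k _
      have h := hterm ρ' hρ' k
      have hnn : 0 ≤ r * (b k * t - (ρ' k / K - b k)) ^ 2 / ((ρ' k / K - b k) * t ^ 2) := by
        have := hxpos ρ' hρ' k
        positivity
      linarith
    have hcpos : (0:ℝ) ≤ 1 / c := by positivity
    exact mul_le_mul_of_nonneg_left hsum_le hcpos
  -- main proof
  intro ρ hρ
  constructor
  · intro hmin
    have heq : ε ρ = ε ρopt := le_antisymm (hmin ρopt hfo) (hlower ρ hρ)
    have hsumeq : ∑ k, (r * (b k) ^ 2 / (ρ k / K - b k)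
        - r * (2 * b k / t - (ρ k / K - b k) / t ^ 2)) = 0 := by
      rw [Finset.sum_sub_distrib, htangent_sum ρ hρ]
      have h3 : (1 / (c:ℝ)) * ∑ k, r * (b k) ^ 2 / (ρ k / K - b k)
          = (1 / c) * (r * B / t) := by rw [← hε' ρ, ← hεopt, heq]
      have hc' : (1 / (c:ℝ)) ≠ 0 := by positivity
      have := mul_left_cancel₀ hc' h3
      linarith
    have heach : ∀ k, ρ k / K - b k = t * b k := by
      intro k
      have hzero := (Finset.sum_eq_zero_iff_of_nonneg (fun k _ => by
        rw [hterm ρ hρ k]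
        have := hxpos ρ hρ k
        positivity)).1 hsumeq k (Finset.mem_univ k)
      rw [hterm ρ hρ k] at hzero
      have hx := hxpos ρ hρ k
      have hsq : (b k * t - (ρ k / K - b k)) ^ 2 = 0 := by
        by_contra hne0
        have h1 : 0 < (b k * t - (ρ k / K - b k)) ^ 2 :=
          lt_of_le_of_ne (sq_nonneg _) (Ne.symm hne0)
        have : 0 < r * (b k * t - (ρ k / K - b k)) ^ 2 / ((ρ k / K - b k) * t ^ 2) := by
          positivity
        linarith
      have := pow_eq_zero_iff (n := 2) (by norm_num) |>.1 hsq
      linarith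
    have hρval : ∀ k, ρ k = K * (1 + t) * b k := fun k =>
      aux_rho (ρ k) K (b k) t hK0.ne' (heach k)
    intro i j
    rw [hρval i, hρval j]
    have hbi : b i * nk i = Real.sqrt (n - nk i) := by
      rw [hbdef]; exact div_mul_cancel₀ _ (hnk i).1.ne'
    have hbj : b j * nk j = Real.sqrt (n - nk j) := by
      rw [hbdef]; exact div_mul_cancel₀ _ (hnk j).1.ne'
    calc K * (1 + t) * b i * (nk i * Real.sqrt (n - nk j))
        = K * (1 + t) * (b i * nk i) * Real.sqrt (n - nk j) := by ring
      _ = K * (1 + t) * Real.sqrt (n - nk i) * Real.sqrt (n - nk j) := by rw [hbi]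
      _ = K * (1 + t) * (b j * nk j) * Real.sqrt (n - nk i) := by rw [hbj]; ring
      _ = K * (1 + t) * b j * (nk j * Real.sqrt (n - nk i)) := by ring
  · intro hp
    have hval : ∀ k, ρ k = S * b k / B := uniq ρ hρ hp
    have hfun : ρ = ρopt := by
      funext k
      rw [hval k, hoval k]
    rw [hfun]
    exact hlower
end
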